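/- arXiv:2302.01405 — 7 statements merged into one kernel-verified Lean document; each statement's English description precedes it below -/
import Mathlib

section
/- Let T be a piece type closed under submoves. If the immediate capture graph ICG admits a spanning in-arborescence rooted at some vertex r, then there is a solution from initial position P₀ = L, and its final location is r. -/
/-- A move ⟨ℓ₀, ℓ₁, …, ℓ_k⟩ (k ≥ 1): source ℓ₀, intermediate locations, destination ℓ_k. -/
structure ChessMove (α : Type*) where
  src : α
  mid : List α
  dst : α

/-- The full sequence of locations of a move. -/
def ChessMove.toList {α : Type*} (m : ChessMove α) : List α :=
  m.src :: (m.mid ++ [m.dst])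

/-- A piece type is closed under submoves if every contiguous subsequence (of length ≥ 2,
which is automatic for a `ChessMove`) of a move is again a move of that type. -/
def ClosedUnderSubmoves {α : Type*} (T : Set (ChessMove α)) : Prop :=
  ∀ m ∈ T, ∀ m' : ChessMove α, m'.toList <:+: m.toList → m' ∈ T

/-- A piece type is symmetric if it is closed under reversal of moves. -/
def SymmetricType {α : Type*} (T : Set (ChessMove α)) : Prop :=
  ∀ m ∈ T, (⟨m.dst, m.mid.reverse, m.src⟩ : ChessMove α) ∈ T

/-- A move is valid in position `P` if its source and destination are occupied
and its intermediate locations are empty. -/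
def MoveValid {α : Type*} (P : Set α) (m : ChessMove α) : Prop :=
  m.src ∈ P ∧ m.dst ∈ P ∧ ∀ x ∈ m.mid, x ∉ P

/-- Executing a move empties its source location. -/
def execMove {α : Type*} (P : Set α) (m : ChessMove α) : Set α := P \ {m.src}

/-- A sequence of moves is valid from position `P` if each move is valid in the position
obtained by executing all previous moves. -/
def ValidSeq {α : Type*} : Set α → List (ChessMove α) → Prop
  | _, [] => True
  | P, m :: ms => MoveValid P m ∧ ValidSeq (execMove P m) ms

/-- The position obtained after executing all moves of a sequence. -/
def finalPos {α : Type*} (P : Set α) (ms : List (ChessMove α)) : Set α :=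
  ms.foldl execMove P

/-- A solution for piece type `T` from the fully occupied initial position with
final location `r`: a valid sequence of moves of `T` ending with only `r` occupied. -/
def IsSolution {α : Type*} (T : Set (ChessMove α)) (ms : List (ChessMove α)) (r : α) : Prop :=
  (∀ m ∈ ms, m ∈ T) ∧ ValidSeq Set.univ ms ∧ finalPos Set.univ ms = {r}

/-- Edge of the immediate capture graph ICG on the fully occupied board:
a two-location move of `T`. -/
def ICGedge {α : Type*} (T : Set (ChessMove α)) (a b : α) : Prop :=
  (⟨a, [], b⟩ : ChessMove α) ∈ T

/-- Edge of the immediate capture graph ICG(V, B): an edge `(a, b)` for every move of `T`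
from `a ∈ V` to `b ∈ V` none of whose intermediate locations is in `V ∪ B`. -/
def ICGEdge {α : Type*} (T : Set (ChessMove α)) (V B : Set α) (a b : α) : Prop :=
  a ∈ V ∧ b ∈ V ∧ ∃ m ∈ T, m.src = a ∧ m.dst = b ∧ ∀ x ∈ m.mid, x ∉ V ∪ B

/-- `H_i(p) = ICG(L ∖ {p₀, …, p_i}, {p_i})`. -/
def Hgraph {α : Type*} (T : Set (ChessMove α)) (p : ℕ → α) (i : ℕ) : α → α → Prop :=
  ICGEdge T {x | ∀ j ≤ i, x ≠ p j} {p i}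

/-- `G_i(p) = ICG(L ∖ {p₀, …, p_i}, ∅)`. -/
def Ggraph {α : Type*} (T : Set (ChessMove α)) (p : ℕ → α) (i : ℕ) : α → α → Prop :=
  ICGEdge T {x | ∀ j ≤ i, x ≠ p j} ∅

/-- A villain at `v` is strongly capturable by the hero location sequence `p₀, …, p_k`
if for some `i < k` there is a directed walk from `v` to `p_{i+1}` in `H_i(p)`. -/
def StronglyCapturable {α : Type*} (T : Set (ChessMove α)) (p : ℕ → α) (k : ℕ) (v : α) :
    Prop :=
  ∃ i < k, Relation.ReflTransGen (Hgraph T p i) v (p (i + 1))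

/-- `p₀, …, p_k` is a hero path: there are hero moves `⟨p_i, …, p_{i+1}⟩ ∈ S`,
each valid in the initial (fully occupied) position with `p₀, …, p_{i-1}` removed. -/
def HeroPath {α : Type*} (S : Set (ChessMove α)) (p : ℕ → α) (k : ℕ) : Prop :=
  ∀ i < k, ∃ mid : List α, (⟨p i, mid, p (i + 1)⟩ : ChessMove α) ∈ S ∧
    MoveValid {x | ∀ j < i, x ≠ p j} ⟨p i, mid, p (i + 1)⟩

/-- A villain at `v` is weakly capturable after the hero path `p₀, …, p_k` if some hero path
extending it ends at a location reachable from `v` by a directed walk in `G_k(p)`. -/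
def WeaklyCapturable {α : Type*} (S T : Set (ChessMove α)) (p : ℕ → α) (k : ℕ) (v : α) :
    Prop :=
  ∃ (k' : ℕ) (q : ℕ → α), k ≤ k' ∧ (∀ i ≤ k, q i = p i) ∧ HeroPath S q k' ∧
    Relation.ReflTransGen (Ggraph T p k) v (q k')

/-- A hero path `p₀, …, p_k` is `v`-interesting if the villain at `v` is not strongly
capturable by it but is weakly capturable after it. -/
def Interesting {α : Type*} (S T : Set (ChessMove α)) (p : ℕ → α) (k : ℕ) (v : α) : Prop :=
  ¬ StronglyCapturable T p k v ∧ WeaklyCapturable S T p k v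

/-- A valid sequence of hero/villain moves from position `P` with the hero at `h`:
entries tagged `true` are hero moves (from the hero's current location, in `S`),
entries tagged `false` are villain moves (in `T`, not touching the hero). -/
def HVValidSeq {α : Type*} (S T : Set (ChessMove α)) :
    Set α → α → List (Bool × ChessMove α) → Prop
  | _, _, [] => True
  | P, h, (b, m) :: ms =>
      if b then
        m ∈ S ∧ m.src = h ∧ MoveValid P m ∧ HVValidSeq S T (P \ {m.src}) m.dst ms
      else
        m ∈ T ∧ m.src ≠ h ∧ m.dst ≠ h ∧ MoveValid P m ∧ HVValidSeq S T (P \ {m.src}) h ms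

/-- The final position of a hero/villain play from the fully occupied board. -/
def hvFinalPos {α : Type*} (ms : List (Bool × ChessMove α)) : Set α :=
  ms.foldl (fun P bm => P \ {bm.2.src}) Set.univ

/-- The final hero location of a hero/villain play started with the hero at `p0`. -/
def hvFinalHero {α : Type*} (p0 : α) (ms : List (Bool × ChessMove α)) : α :=
  ms.foldl (fun h bm => if bm.1 then bm.2.dst else h) p0

/-- The subsequence of hero moves of a play. -/
def heroMoves {α : Type*} (ms : List (Bool × ChessMove α)) : List (ChessMove α) :=
  (ms.filter (fun bm => bm.1)).map (fun bm => bm.2)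

/-- A solution of the hero–villain puzzle with the hero starting at `p0`:
a valid play ending with only the hero on the board. -/
def HVSolution {α : Type*} (S T : Set (ChessMove α)) (p0 : α)
    (ms : List (Bool × ChessMove α)) : Prop :=
  HVValidSeq S T Set.univ p0 ms ∧ hvFinalPos ms = {hvFinalHero p0 ms}

/-- The hero makes exactly `k` moves, visiting the locations `p₀, p₁, …, p_k` in order. -/
def HeroFollows {α : Type*} (p : ℕ → α) (k : ℕ) (ms : List (Bool × ChessMove α)) : Prop :=
  ∃ mid : ℕ → List α,
    heroMoves ms = (List.range k).map (fun i => ⟨p i, mid i, p (i + 1)⟩)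

/-- If the immediate capture graph admits a spanning in-arborescence rooted
at `r` (encoded by a parent function `f`: every vertex `v ≠ r` has exactly one outgoing
edge `(v, f v)` of the arborescence, which is an ICG edge, and following these unique
outgoing edges from any vertex gives a directed path reaching the root `r`),
then there is a solution from the fully occupied board, with final location `r`. -/
theorem arborescence_gives_solution {α : Type*} [Fintype α] [DecidableEq α]
    (T : Set (ChessMove α)) (hT : ClosedUnderSubmoves T)
    (r : α) (f : α → α)
    (hedges : ∀ v : α, v ≠ r → ICGedge T v (f v))
    (hpaths : ∀ v : α, ∃ n : ℕ, f^[n] v = r) :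
    ∃ ms : List (ChessMove α), IsSolution T ms r := by
  classical
  have hdspec : ∀ v, f^[Nat.find (hpaths v)] v = r := fun v => Nat.find_spec (hpaths v)
  set d : α → ℕ := fun v => Nat.find (hpaths v) with hd
  have hdlt : ∀ v, v ≠ r → d (f v) < d v := by
    intro v hv
    have h1 : d v ≠ 0 := by
      intro h
      apply hv
      have h2 := hdspec v
      rw [show Nat.find (hpaths v) = d v from rfl, h] at h2
      simpa using h2
    obtain ⟨m, hm⟩ := Nat.exists_eq_succ_of_ne_zero h1
    have h3 : f^[m] (f v) = r := by
      have h2 := hdspec v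
      rw [show Nat.find (hpaths v) = d v from rfl, hm, Function.iterate_succ_apply] at h2
      exact h2
    have h4 : d (f v) ≤ m := Nat.find_le h3
    omega
  have key : ∀ n (s : Finset α), s.card = n → r ∈ s →
      (∀ v ∈ s, v ≠ r → f v ∈ s) →
      ∃ ms : List (ChessMove α), (∀ m ∈ ms, m ∈ T) ∧ ValidSeq (↑s) ms ∧
        finalPos (↑s) ms = {r} := by
    intro n
    induction n with
    | zero =>
      intro s hcard hr _
      rw [Finset.card_eq_zero] at hcard
      subst hcard
      simp at hr
    | succ n ih =>
      intro s hcard hr hclosed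
      by_cases hs : s = {r}
      · subst hs
        refine ⟨[], by simp, trivial, by simp [finalPos]⟩
      · have hex : (s.filter (· ≠ r)).Nonempty := by
          by_contra h
          rw [Finset.not_nonempty_iff_eq_empty, Finset.filter_eq_empty_iff] at h
          apply hs
          apply Finset.eq_singleton_iff_unique_mem.mpr
          refine ⟨hr, fun v hv => ?_⟩
          have := h hv
          simpa using this
        obtain ⟨v, hvmem, hvmax⟩ := Finset.exists_max_image (s.filter (· ≠ r)) d hex
        rw [Finset.mem_filter] at hvmem
        obtain ⟨hvs, hvr⟩ := hvmem
        have hvr : v ≠ r := by simpa using hvr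
        have hfv : f v ∈ s := hclosed v hvs hvr
        -- the move
        set m : ChessMove α := ⟨v, [], f v⟩ with hmdef
        have hmT : m ∈ T := hedges v hvr
        have hmvalid : MoveValid (↑s) m := ⟨hvs, hfv, by simp [hmdef]⟩
        have hexec : execMove (↑s) m = ↑(s.erase v) := by
          ext x
          simp [execMove, hmdef, Finset.mem_erase, and_comm]
        have hrerase : r ∈ s.erase v := Finset.mem_erase.mpr ⟨Ne.symm hvr, hr⟩
        have hcard' : (s.erase v).card = n := by
          rw [Finset.card_erase_of_mem hvs, hcard]
          rfl
        have hclosed' : ∀ w ∈ s.erase v, w ≠ r → f w ∈ s.erase v := by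
          intro w hw hwr
          rw [Finset.mem_erase] at hw
          obtain ⟨hwv, hws⟩ := hw
          refine Finset.mem_erase.mpr ⟨?_, hclosed w hws hwr⟩
          intro hfwv
          have h1 : d w ≤ d v := hvmax w (Finset.mem_filter.mpr ⟨hws, by simpa using hwr⟩)
          have h2 : d (f w) < d w := hdlt w hwr
          rw [hfwv] at h2
          omega
        obtain ⟨ms, hmsT, hmsvalid, hmsfinal⟩ := ih (s.erase v) hcard' hrerase hclosed'
        refine ⟨m :: ms, ?_, ?_, ?_⟩
        · intro m' hm'
          rcases List.mem_cons.mp hm' with h | h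
          · exact h ▸ hmT
          · exact hmsT m' h
        · refine ⟨hmvalid, ?_⟩
          rw [hexec]
          exact hmsvalid
        · show finalPos (execMove (↑s) m) ms = {r}
          rw [hexec]
          exact hmsfinal
  obtain ⟨ms, h1, h2, h3⟩ := key (Fintype.card α) Finset.univ rfl (Finset.mem_univ r)
    (fun v hv _ => Finset.mem_univ (f v))
  rw [Finset.coe_univ] at h2 h3
  exact ⟨ms, h1, h2, h3⟩
end

section
/- Let T be a piece type closed under submoves and let V and B be disjoint sets of locations. Suppose ⟨ℓ₀, ℓ₁, …, ℓ_m⟩ ∈ T is a move such that ℓ₀, ℓ_m ∈ V and no ℓ_i (0 ≤ i ≤ m) lies in B. Then there is a directed walk from ℓ₀ to ℓ_m in ICG(V, B). -/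
private lemma break_icg_aux {α : Type*}
    (T : Set (ChessMove α)) (hT : ClosedUnderSubmoves T) (V B : Set α) :
    ∀ (n : ℕ) (src dst : α) (mid : List α), mid.length ≤ n →
    (⟨src, mid, dst⟩ : ChessMove α) ∈ T → src ∈ V → dst ∈ V →
    (∀ x ∈ mid, x ∉ B) →
    Relation.ReflTransGen (ICGEdge T V B) src dst := by
  intro n
  induction n with
  | zero =>
    intro src dst mid hlen hm hs hd hB
    have : mid = [] := List.eq_nil_of_length_eq_zero (Nat.le_zero.mp hlen)
    subst this
    exact Relation.ReflTransGen.single ⟨hs, hd, ⟨_, hm, rfl, rfl, by simp⟩⟩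
  | succ n ih =>
    intro src dst mid hlen hm hs hd hB
    by_cases hV : ∀ x ∈ mid, x ∉ V
    · refine Relation.ReflTransGen.single ⟨hs, hd, ⟨_, hm, rfl, rfl, ?_⟩⟩
      intro x hx
      simp only [Set.mem_union]
      exact fun h => h.elim (hV x hx) (hB x hx)
    · push_neg at hV
      obtain ⟨x, hxmid, hxV⟩ := hV
      obtain ⟨l1, l2, rfl⟩ := List.append_of_mem hxmid
      have hm1 : (⟨src, l1, x⟩ : ChessMove α) ∈ T := by
        refine hT _ hm _ ⟨[], l2 ++ [dst], ?_⟩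
        simp [ChessMove.toList]
      have hm2 : (⟨x, l2, dst⟩ : ChessMove α) ∈ T := by
        refine hT _ hm _ ⟨src :: l1, [], ?_⟩
        simp [ChessMove.toList]
      have hlen1 : l1.length ≤ n := by
        simp at hlen; omega
      have hlen2 : l2.length ≤ n := by
        simp at hlen; omega
      have w1 := ih src x l1 hlen1 hm1 hs hxV
        (fun y hy => hB y (by simp [hy]))
      have w2 := ih x dst l2 hlen2 hm2 hxV hd
        (fun y hy => hB y (by simp [hy]))
      exact w1.trans w2

/-- If a move of `T` starts and ends in `V` and avoids `B` entirely, then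
there is a directed walk from its source to its destination in `ICG(V, B)`. -/
theorem break_icg {α : Type*} [Fintype α] [DecidableEq α]
    (T : Set (ChessMove α)) (hT : ClosedUnderSubmoves T)
    (V B : Set α) (hVB : Disjoint V B)
    (m : ChessMove α) (hm : m ∈ T) (hsrc : m.src ∈ V) (hdst : m.dst ∈ V)
    (hB : ∀ x ∈ m.toList, x ∉ B) :
    Relation.ReflTransGen (ICGEdge T V B) m.src m.dst := by
  exact break_icg_aux T hT V B m.mid.length m.src m.dst m.mid le_rfl hm hsrc hdst
    (fun x hx => hB x (by simp [ChessMove.toList, hx]))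
end

section
/- Let T be a piece type closed under submoves and let V and B be disjoint sets of locations. Let m₀, m₁, …, m_k ∈ T be a sequence of moves such that (1) the destination (last location) of m_i equals the source (first location) of m_{i+1} for each i, (2) each move's source and destination lies in V, and (3) no location of any move lies in B. Then there is a directed walk in ICG(V, B) from the source of m₀ to the destination of m_k. -/
private lemma split_first {α : Type*} (p : α → Prop) (l : List α) (h : ∃ x ∈ l, p x) :
    ∃ a x b, l = a ++ x :: b ∧ p x ∧ ∀ y ∈ a, ¬ p y := by
  induction l with
  | nil => simp at h
  | cons z l ih =>
    by_cases hz : p z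
    · exact ⟨[], z, l, by simp, hz, by simp⟩
    · obtain ⟨x, hx, hpx⟩ := h
      rcases List.mem_cons.mp hx with rfl | h1
      · exact absurd hpx hz
      obtain ⟨a, w, b, heq, hpw, ha⟩ := ih ⟨x, h1, hpx⟩
      refine ⟨z :: a, w, b, by rw [heq]; simp, hpw, ?_⟩
      intro y hy'
      rcases List.mem_cons.mp hy' with rfl | hy
      · exact hz
      · exact ha y hy

private lemma single_walk {α : Type*} (T : Set (ChessMove α)) (hT : ClosedUnderSubmoves T)
    (V B : Set α) :
    ∀ n (m : ChessMove α), m.mid.length ≤ n → m ∈ T → m.src ∈ V → m.dst ∈ V →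
      (∀ x ∈ m.toList, x ∉ B) →
      Relation.ReflTransGen (ICGEdge T V B) m.src m.dst := by
  intro n
  induction n with
  | zero =>
    intro m hlen hm hs hd hB
    have : m.mid = [] := List.length_eq_zero_iff.mp (Nat.le_zero.mp hlen)
    refine Relation.ReflTransGen.single ⟨hs, hd, m, hm, rfl, rfl, ?_⟩
    simp [this]
  | succ n ih =>
    intro m hlen hm hs hd hB
    by_cases h : ∃ x ∈ m.mid, x ∈ V
    · obtain ⟨a, x, b, hsplit, hxV, haV⟩ := split_first (· ∈ V) m.mid h
      have hmid : ∀ y ∈ m.mid, y ∈ m.toList := by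
        intro y hy; simp [ChessMove.toList]; tauto
      have hsub : m.toList = (ChessMove.mk m.src a x).toList ++ (b ++ [m.dst]) := by
        simp [ChessMove.toList, hsplit]
      have hm1 : (ChessMove.mk m.src a x) ∈ T :=
        hT m hm _ ⟨[], b ++ [m.dst], by rw [hsub]; simp⟩
      have hsub2 : m.toList = (m.src :: a) ++ (ChessMove.mk x b m.dst).toList := by
        simp [ChessMove.toList, hsplit]
      have hm2 : (ChessMove.mk x b m.dst) ∈ T :=
        hT m hm _ ⟨m.src :: a, [], by rw [hsub2]; simp⟩
      have step : ICGEdge T V B m.src x := by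
        refine ⟨hs, hxV, _, hm1, rfl, rfl, ?_⟩
        intro y hy
        simp only [Set.mem_union]
        push_neg
        exact ⟨haV y hy, hB y (hmid y (by simp [hsplit, hy]))⟩
      have hblen : b.length ≤ n := by
        have := hlen; rw [hsplit] at this; simp at this; omega
      have tail := ih (ChessMove.mk x b m.dst) hblen hm2 hxV hd (by
        intro y hy
        apply hB
        simp [ChessMove.toList, hsplit] at hy ⊢
        tauto)
      exact Relation.ReflTransGen.head step tail
    · push_neg at h
      refine Relation.ReflTransGen.single ⟨hs, hd, m, hm, rfl, rfl, ?_⟩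
      intro y hy
      simp only [Set.mem_union]
      push_neg
      exact ⟨h y hy, hB y (by simp [ChessMove.toList]; tauto)⟩

/-- Given a chained sequence of moves of `T` (the destination of each is
the source of the next), all of whose sources and destinations lie in `V` and none of
whose locations lie in `B`, there is a directed walk in `ICG(V, B)` from the source of the
first move to the destination of the last. -/
theorem break_icg_walk {α : Type*} [Fintype α] [DecidableEq α]
    (T : Set (ChessMove α)) (hT : ClosedUnderSubmoves T)
    (V B : Set α) (hVB : Disjoint V B)
    (ms : List (ChessMove α)) (hne : ms ≠ [])
    (hmem : ∀ m ∈ ms, m ∈ T)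
    (hchain : ms.Chain' (fun m m' => m.dst = m'.src))
    (hV : ∀ m ∈ ms, m.src ∈ V ∧ m.dst ∈ V)
    (hB : ∀ m ∈ ms, ∀ x ∈ m.toList, x ∉ B) :
    Relation.ReflTransGen (ICGEdge T V B) (ms.head hne).src (ms.getLast hne).dst := by
  induction ms with
  | nil => exact absurd rfl hne
  | cons m rest ih =>
    have hsingle := single_walk T hT V B m.mid.length m le_rfl
      (hmem m (by simp)) (hV m (by simp)).1 (hV m (by simp)).2 (hB m (by simp))
    cases rest with
    | nil => simpa using hsingle
    | cons m' rest' =>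
      have hchain' : (m' :: rest').Chain' (fun a b => a.dst = b.src) :=
        (List.isChain_cons.mp hchain).2
      have hdst : m.dst = m'.src := by
        have := List.isChain_cons_cons.mp hchain; exact this.1
      have tail := ih (by simp) (fun x hx => hmem x (by simp [hx])) hchain'
        (fun x hx => hV x (by simp [hx])) (fun x hx => hB x (by simp [hx]))
      simp only [List.head_cons, List.getLast_cons (by simp : (m' :: rest') ≠ [])] at *
      exact hsingle.trans (hdst ▸ tail)
end

section
/- Let T be a piece type closed under submoves. Let V, B be disjoint sets of locations and V′, B′ be disjoint sets of locations with V ⊆ V′ and B′ ⊆ B. If there is a directed walk from ℓ₀ to ℓ₁ in ICG(V, B), then there is also a directed walk from ℓ₀ to ℓ₁ in ICG(V′, B′). -/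
/-! A move of `T` whose intermediate locations avoid `B'` breaks, at its intermediate locations
lying in `V'`, into submoves that are edges of `ICG(V', B')`; an edge of `ICG(V, B)` is such a
move once `V ⊆ V'` and `B' ⊆ B`. -/

theorem ClosedUnderSubmoves.split {α : Type*} {T : Set (ChessMove α)}
    (hT : ClosedUnderSubmoves T) {a b c : α} {pre post : List α}
    (hm : (⟨a, pre ++ c :: post, b⟩ : ChessMove α) ∈ T) :
    (⟨a, pre, c⟩ : ChessMove α) ∈ T ∧ (⟨c, post, b⟩ : ChessMove α) ∈ T :=
  ⟨hT _ hm _ ⟨[], post ++ [b], by simp [ChessMove.toList]⟩,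
    hT _ hm _ ⟨a :: pre, [], by simp [ChessMove.toList]⟩⟩

theorem ClosedUnderSubmoves.reflTransGen_icgEdge {α : Type*} {T : Set (ChessMove α)}
    (hT : ClosedUnderSubmoves T) {V B : Set α} {a b : α} (mid : List α)
    (hm : (⟨a, mid, b⟩ : ChessMove α) ∈ T) (ha : a ∈ V) (hb : b ∈ V)
    (hmid : ∀ x ∈ mid, x ∉ B) :
    Relation.ReflTransGen (ICGEdge T V B) a b := by
  induction hlen : mid.length using Nat.strong_induction_on generalizing mid a b with
  | _ n ih =>
    by_cases hV : ∃ c ∈ mid, c ∈ V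
    · obtain ⟨c, hc, hcV⟩ := hV
      obtain ⟨pre, post, rfl⟩ := List.append_of_mem hc
      obtain ⟨hpre, hpost⟩ := hT.split hm
      have hlen_pre : pre.length < n := by simp [← hlen]
      have hlen_post : post.length < n := by simp [← hlen]; omega
      exact (ih _ hlen_pre pre hpre ha hcV (fun x hx => hmid x (by simp [hx])) rfl).trans
        (ih _ hlen_post post hpost hcV hb (fun x hx => hmid x (by simp [hx])) rfl)
    · exact .single ⟨ha, hb, _, hm, rfl, rfl,
        fun x hx hx' => hx'.elim (fun hxV => hV ⟨x, hx, hxV⟩) (hmid x hx)⟩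

theorem icg_walk_subset_general {α : Type*}
    (T : Set (ChessMove α)) (hT : ClosedUnderSubmoves T)
    (V B V' B' : Set α)
    (hV : V ⊆ V') (hB : B' ⊆ B) (a b : α)
    (hwalk : Relation.ReflTransGen (ICGEdge T V B) a b) :
    Relation.ReflTransGen (ICGEdge T V' B') a b := by
  refine Relation.reflTransGen_closed (fun x y hxy => ?_) a b hwalk
  obtain ⟨hx, hy, ⟨_, mid, _⟩, hm, rfl, rfl, hmid⟩ := hxy
  exact hT.reflTransGen_icgEdge mid hm (hV hx) (hV hy)
    fun z hz hzB' => hmid z hz (Or.inr (hB hzB'))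

/-- Directed walks in `ICG(V, B)` extend to directed walks in
`ICG(V', B')` whenever `V ⊆ V'` and `B' ⊆ B`. -/
theorem icg_walk_subset {α : Type*} [Fintype α] [DecidableEq α]
    (T : Set (ChessMove α)) (hT : ClosedUnderSubmoves T)
    (V B V' B' : Set α) (hVB : Disjoint V B) (hVB' : Disjoint V' B')
    (hV : V ⊆ V') (hB : B' ⊆ B) (a b : α)
    (hwalk : Relation.ReflTransGen (ICGEdge T V B) a b) :
    Relation.ReflTransGen (ICGEdge T V' B') a b :=
  icg_walk_subset_general T hT V B V' B' hV hB a b hwalk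
end

section
/- In the hero–villain setting, if a puzzle has a solution, then it has a solution in which the sequence of locations visited by the hero forms a hero path. -/
/-!
Measure a solution by its badness: the number of intermediate locations of hero moves that the
hero has not vacated itself earlier. In a solution of badness zero every hero move passes only
over locations the hero has left behind, so the hero's locations form a hero path.

Otherwise let `x` be such a location on the first hero move `m` where this happens. Since `x` is
empty at that time but the hero never left it, some villain move `μ` vacated `x`. Cancel `μ`:
its villain stays on `x`, every later move jumping over `x` is cut short to capture on `x`
(closure of `T` under submoves), and `m` is split at `x` into a capture of that villain and a
move from `x` onwards (closure of `S` under submoves). The result is again a solution, and its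
badness is smaller because `x` is now on the hero's trail.
-/
namespace List

variable {α : Type*}

theorem takeWhile_append_cons_prefix {p : α → Bool} {a : α} (ha : p a = false)
    (l₁ l₂ : List α) : (l₁ ++ a :: l₂).takeWhile p <+: l₁ := by
  rw [takeWhile_append]
  split_ifs
  · simp [takeWhile_cons_of_neg, ha]
  · exact takeWhile_prefix p

variable [DecidableEq α]

theorem exists_eq_takeWhile_ne_append_cons {x : α} :
    ∀ {l : List α}, x ∈ l → ∃ r, l = l.takeWhile (· ≠ x) ++ x :: r
  | a :: l, h => by
    by_cases hax : a = x
    · exact ⟨l, by simp [hax]⟩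
    · obtain ⟨r, hr⟩ := exists_eq_takeWhile_ne_append_cons (mem_of_ne_of_mem (Ne.symm hax) h)
      exact ⟨r, by simpa [hax] using hr⟩

theorem takeWhile_ne_append_cons_reverse_sublist {x : α} {l : List α} (h : x ∈ l) :
    l.takeWhile (· ≠ x) ++ x :: (l.reverse.takeWhile (· ≠ x)).reverse <+ l := by
  obtain ⟨r, hr⟩ := exists_eq_takeWhile_ne_append_cons h
  have hrev : l.reverse.takeWhile (· ≠ x) <+: r.reverse := by
    rw [hr]
    simpa using takeWhile_append_cons_prefix (p := (· ≠ x)) (by simp) r.reverse _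
  conv_rhs => rw [hr]
  exact ((reverse_prefix.1 (by simpa using hrev)).sublist.cons_cons x).append_left _

end List

namespace ChessMove

variable {α : Type*}

def reverse (m : ChessMove α) : ChessMove α := ⟨m.dst, m.mid.reverse, m.src⟩

@[simp] lemma src_reverse (m : ChessMove α) : m.reverse.src = m.dst := rfl
@[simp] lemma dst_reverse (m : ChessMove α) : m.reverse.dst = m.src := rfl
@[simp] lemma mid_reverse (m : ChessMove α) : m.reverse.mid = m.mid.reverse := rfl

lemma toList_reverse (m : ChessMove α) : m.reverse.toList = m.toList.reverse := by
  simp [toList, reverse]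

variable [DecidableEq α]

def truncate (x : α) (m : ChessMove α) : ChessMove α :=
  if x ∈ m.mid then ⟨m.src, m.mid.takeWhile (· ≠ x), x⟩ else m

variable {x : α} {m : ChessMove α}

@[simp] lemma src_truncate : (m.truncate x).src = m.src := by
  unfold truncate; split_ifs <;> rfl

lemma truncate_of_notMem (h : x ∉ m.mid) : m.truncate x = m := if_neg h

lemma truncate_of_mem (h : x ∈ m.mid) : m.truncate x = ⟨m.src, m.mid.takeWhile (· ≠ x), x⟩ :=
  if_pos h

lemma mid_truncate_sublist : (m.truncate x).mid.Sublist m.mid := by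
  unfold truncate; split_ifs
  · exact List.takeWhile_sublist _
  · exact List.Sublist.refl _

lemma toList_truncate_prefix : (m.truncate x).toList <+: m.toList := by
  by_cases h : x ∈ m.mid
  · obtain ⟨r, hr⟩ := List.exists_eq_takeWhile_ne_append_cons h
    rw [truncate_of_mem h]
    refine ⟨r ++ [m.dst], ?_⟩
    simp only [toList]
    conv_rhs => rw [hr]
    simp
  · rw [truncate_of_notMem h]

lemma dst_truncate_of_mem (h : x ∈ m.mid) : (m.truncate x).dst = x := by
  rw [truncate_of_mem h]

lemma dst_truncate_eq_or : (m.truncate x).dst = m.dst ∨ (m.truncate x).dst = x := by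
  unfold truncate; split_ifs <;> simp

lemma mid_truncate_countP_add_lt {p : α → Bool} (h : x ∈ m.mid) (hx : p x) :
    (m.truncate x).mid.countP p + (m.reverse.truncate x).reverse.mid.countP p <
      m.mid.countP p := by
  have hsub := (List.takeWhile_ne_append_cons_reverse_sublist h).countP_le (p := p)
  rw [truncate_of_mem h, truncate_of_mem (by simpa using h)]
  simp only [List.countP_append, List.countP_cons, hx, if_true] at hsub
  simp only [mid_reverse]
  omega

end ChessMove

namespace ClosedUnderSubmoves

variable {α : Type*} [DecidableEq α] {T : Set (ChessMove α)} {m : ChessMove α}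

lemma truncate_mem (hT : ClosedUnderSubmoves T) (hm : m ∈ T) (x : α) : m.truncate x ∈ T :=
  hT m hm _ ChessMove.toList_truncate_prefix.isInfix

lemma reverse_truncate_reverse_mem (hT : ClosedUnderSubmoves T) (hm : m ∈ T) (x : α) :
    (m.reverse.truncate x).reverse ∈ T := by
  refine hT m hm _ ?_
  rw [ChessMove.toList_reverse, ← List.reverse_reverse m.toList, List.reverse_infix,
    ← ChessMove.toList_reverse]
  exact ChessMove.toList_truncate_prefix.isInfix

end ClosedUnderSubmoves

namespace MoveValid

variable {α : Type*} {P : Set α} {m : ChessMove α}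

lemma reverse (h : MoveValid P m) : MoveValid P m.reverse :=
  ⟨h.2.1, h.1, fun y hy => h.2.2 y (List.mem_reverse.1 hy)⟩

lemma diff_singleton {y : α} (h : MoveValid P m) (hs : m.src ≠ y) (hd : m.dst ≠ y) :
    MoveValid (P \ {y}) m :=
  ⟨⟨h.1, hs⟩, ⟨h.2.1, hd⟩, fun z hz hzP => h.2.2 z hz hzP.1⟩

lemma insert_truncate [DecidableEq α] {x : α} (h : MoveValid P m) (hx : x ∉ P) :
    MoveValid (insert x P) (m.truncate x) := by
  by_cases hxm : x ∈ m.mid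
  · rw [ChessMove.truncate_of_mem hxm]
    refine ⟨Or.inr h.1, Or.inl rfl, fun y hy => ?_⟩
    rintro (rfl | hyP)
    · simpa using List.mem_takeWhile_imp hy
    · exact h.2.2 y ((List.takeWhile_sublist _).subset hy) hyP
  · rw [ChessMove.truncate_of_notMem hxm]
    refine ⟨Or.inr h.1, Or.inr h.2.1, fun y hy => ?_⟩
    rintro (rfl | hyP)
    · exact hxm hy
    · exact h.2.2 y hy hyP

end MoveValid

section Plays

variable {α : Type*} {S T : Set (ChessMove α)} {P : Set α} {h x : α} {m : ChessMove α}
  {l l₁ l₂ : List (Bool × ChessMove α)}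

def posAfter (P : Set α) (l : List (Bool × ChessMove α)) : Set α :=
  l.foldl (fun P bm => P \ {bm.2.src}) P

def heroAfter (h : α) (l : List (Bool × ChessMove α)) : α :=
  l.foldl (fun h bm => if bm.1 then bm.2.dst else h) h

@[simp] lemma posAfter_nil : posAfter P ([] : List (Bool × ChessMove α)) = P := rfl

@[simp] lemma posAfter_cons (bm : Bool × ChessMove α) :
    posAfter P (bm :: l) = posAfter (P \ {bm.2.src}) l := rfl

lemma posAfter_append : posAfter P (l₁ ++ l₂) = posAfter (posAfter P l₁) l₂ :=
  List.foldl_append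

@[simp] lemma heroAfter_nil : heroAfter h ([] : List (Bool × ChessMove α)) = h := rfl

@[simp] lemma heroAfter_cons (bm : Bool × ChessMove α) :
    heroAfter h (bm :: l) = heroAfter (if bm.1 then bm.2.dst else h) l := rfl

lemma heroAfter_append : heroAfter h (l₁ ++ l₂) = heroAfter (heroAfter h l₁) l₂ :=
  List.foldl_append

@[simp] lemma heroMoves_cons_true : heroMoves ((true, m) :: l) = m :: heroMoves l := rfl

@[simp] lemma heroMoves_cons_false : heroMoves ((false, m) :: l) = heroMoves l := rfl

lemma posAfter_insert (hl : ∀ bm ∈ l, bm.2.src ≠ x) :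
    posAfter (insert x P) l = insert x (posAfter P l) := by
  induction l generalizing P with
  | nil => rfl
  | cons bm l ih =>
    simp only [List.mem_cons, forall_eq_or_imp] at hl
    rw [posAfter_cons, posAfter_cons, Set.insert_sdiff_of_notMem _ (by simpa using hl.1.symm),
      ih hl.2]

@[simp] lemma hvValidSeq_nil : HVValidSeq S T P h [] := trivial

@[simp] lemma hvValidSeq_cons_true :
    HVValidSeq S T P h ((true, m) :: l) ↔
      m ∈ S ∧ m.src = h ∧ MoveValid P m ∧ HVValidSeq S T (P \ {m.src}) m.dst l :=
  Iff.rfl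

@[simp] lemma hvValidSeq_cons_false :
    HVValidSeq S T P h ((false, m) :: l) ↔
      m ∈ T ∧ m.src ≠ h ∧ m.dst ≠ h ∧ MoveValid P m ∧ HVValidSeq S T (P \ {m.src}) h l :=
  Iff.rfl

lemma hvValidSeq_append :
    HVValidSeq S T P h (l₁ ++ l₂) ↔
      HVValidSeq S T P h l₁ ∧ HVValidSeq S T (posAfter P l₁) (heroAfter h l₁) l₂ := by
  induction l₁ generalizing P h with
  | nil => simp
  | cons bm l ih =>
    obtain ⟨_ | _, m⟩ := bm <;> simp [ih, and_assoc]

lemma HVValidSeq.src_mem (hv : HVValidSeq S T P h l) {bm : Bool × ChessMove α}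
    (hbm : bm ∈ l) : bm.2.src ∈ P := by
  induction l generalizing P h with
  | nil => simp at hbm
  | cons bm' l ih =>
    obtain ⟨_ | _, m'⟩ := bm'
    · obtain ⟨-, -, -, hval, hv⟩ := hv
      rcases List.mem_cons.1 hbm with rfl | hbm
      exacts [hval.1, (ih hv hbm).1]
    · obtain ⟨-, -, hval, hv⟩ := hv
      rcases List.mem_cons.1 hbm with rfl | hbm
      exacts [hval.1, (ih hv hbm).1]

lemma HVValidSeq.heroAfter_notMem (hv : HVValidSeq S T P h l) (hh : h ∉ P) :
    heroAfter h l ∉ posAfter P l := by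
  induction l generalizing P h with
  | nil => exact hh
  | cons bm l ih =>
    obtain ⟨_ | _, m⟩ := bm
    · exact ih hv.2.2.2.2 fun hP => hh hP.1
    · exact absurd (hv.2.1 ▸ hv.2.2.1.1) hh

lemma hvFinalPos_eq_posAfter : hvFinalPos l = posAfter Set.univ l := rfl

lemma hvFinalHero_eq_heroAfter : hvFinalHero h l = heroAfter h l := rfl

lemma HVSolution.src_ne_dst {p0 : α} {ms : List (Bool × ChessMove α)}
    (hsol : HVSolution S T p0 ms) (hm : (true, m) ∈ ms) : m.src ≠ m.dst := by
  intro hsd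
  obtain ⟨l₁, l₂, rfl⟩ := List.append_of_mem hm
  obtain ⟨hv, hfin⟩ := hsol
  rw [hvFinalPos_eq_posAfter, hvFinalHero_eq_heroAfter, posAfter_append, heroAfter_append]
    at hfin
  obtain ⟨-, -, -, hv₂⟩ := (hvValidSeq_append.1 hv).2
  refine hv₂.heroAfter_notMem (by simp [hsd]) ?_
  simpa using hfin.ge

lemma HVSolution.replace {p0 : α} {a seg seg' post : List (Bool × ChessMove α)}
    (hsol : HVSolution S T p0 (a ++ seg ++ post))
    (hv : HVValidSeq S T (posAfter Set.univ a) (heroAfter p0 a) seg')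
    (hpos : posAfter (posAfter Set.univ a) seg' = posAfter (posAfter Set.univ a) seg)
    (hhero : heroAfter (heroAfter p0 a) seg' = heroAfter (heroAfter p0 a) seg) :
    HVSolution S T p0 (a ++ seg' ++ post) := by
  obtain ⟨hvs, hfin⟩ := hsol
  simp only [HVSolution, hvFinalPos_eq_posAfter, hvFinalHero_eq_heroAfter, hvValidSeq_append,
    posAfter_append, heroAfter_append] at hvs hfin ⊢
  rw [hpos, hhero]
  exact ⟨⟨⟨hvs.1.1, hv⟩, hvs.2⟩, hfin⟩

end Plays

section Badness

variable {α : Type*} [DecidableEq α] {S T : Set (ChessMove α)} {P : Set α} {h x : α}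
  {m : ChessMove α} {t t' : Finset α} {l l₁ l₂ : List (Bool × ChessMove α)}

def trailAfter (t : Finset α) (l : List (Bool × ChessMove α)) : Finset α :=
  l.foldl (fun t bm => if bm.1 then insert bm.2.src t else t) t

def badness (t : Finset α) : List (Bool × ChessMove α) → ℕ
  | [] => 0
  | (b, m) :: l => if b then m.mid.countP (· ∉ t) + badness (insert m.src t) l else badness t l

@[simp] lemma trailAfter_nil : trailAfter t ([] : List (Bool × ChessMove α)) = t := rfl

@[simp] lemma trailAfter_cons (bm : Bool × ChessMove α) :
    trailAfter t (bm :: l) = trailAfter (if bm.1 then insert bm.2.src t else t) l := rfl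

lemma trailAfter_append : trailAfter t (l₁ ++ l₂) = trailAfter (trailAfter t l₁) l₂ :=
  List.foldl_append

@[simp] lemma badness_nil : badness t ([] : List (Bool × ChessMove α)) = 0 := rfl

@[simp] lemma badness_cons (bm : Bool × ChessMove α) :
    badness t (bm :: l) =
      if bm.1 then bm.2.mid.countP (· ∉ t) + badness (insert bm.2.src t) l else badness t l :=
  rfl

lemma badness_append : badness t (l₁ ++ l₂) = badness t l₁ + badness (trailAfter t l₁) l₂ := by
  induction l₁ generalizing t with
  | nil => simp
  | cons bm l ih => cases hb : bm.1 <;> simp [hb, ih, Nat.add_assoc]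

lemma countP_notMem_anti (htt' : t ⊆ t') (l : List α) :
    l.countP (· ∉ t') ≤ l.countP (· ∉ t) :=
  List.countP_mono_left fun _ _ hy => decide_eq_true fun hyt => of_decide_eq_true hy (htt' hyt)

lemma badness_anti (htt' : t ⊆ t') : badness t' l ≤ badness t l := by
  induction l generalizing t t' with
  | nil => simp
  | cons bm l ih =>
    cases hb : bm.1
    · simpa [hb] using ih htt'
    · simp only [badness_cons, hb, if_true]
      gcongr ?_ + ?_
      · exact countP_notMem_anti htt' _
      · exact ih (Finset.insert_subset_insert _ htt')

lemma subset_trailAfter : t ⊆ trailAfter t l := by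
  induction l generalizing t with
  | nil => rfl
  | cons bm l ih =>
    cases hb : bm.1
    · simpa [hb] using ih
    · simpa [hb] using (Finset.subset_insert _ _).trans ih

lemma src_mem_trailAfter (hm : (true, m) ∈ l) : m.src ∈ trailAfter t l := by
  induction l generalizing t with
  | nil => simp at hm
  | cons bm l ih =>
    rcases List.mem_cons.1 hm with rfl | hm
    · simpa using subset_trailAfter (Finset.mem_insert_self _ _)
    · exact ih hm

lemma mem_trailAfter_of_badness_eq_zero (h0 : badness t l = 0) (hm : (true, m) ∈ l) {y : α}
    (hy : y ∈ m.mid) : y ∈ trailAfter t l := by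
  induction l generalizing t with
  | nil => simp at hm
  | cons bm l ih =>
    obtain ⟨_ | _, m'⟩ := bm
    · simp only [badness_cons, Bool.false_eq_true, if_false] at h0
      exact ih h0 (by simpa using hm)
    · simp only [badness_cons, if_true, Nat.add_eq_zero_iff, List.countP_eq_zero,
        decide_eq_true_eq, not_not] at h0
      rcases List.mem_cons.1 hm with hm | hm
      · cases hm
        simpa using subset_trailAfter (Finset.mem_insert_of_mem (h0.1 y hy))
      · exact ih h0.2 hm

lemma HVValidSeq.mem_trailAfter_or_eq_heroAfter (hv : HVValidSeq S T P h l) :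
    h ∈ trailAfter t l ∨ h = heroAfter h l := by
  induction l generalizing P h t with
  | nil => exact Or.inr rfl
  | cons bm l ih =>
    obtain ⟨_ | _, m⟩ := bm
    · simpa using ih hv.2.2.2.2
    · left
      simpa [← hv.2.1] using subset_trailAfter (Finset.mem_insert_self _ _)

lemma HVValidSeq.dst_mem_trailAfter_or_eq_heroAfter (hv : HVValidSeq S T P h l)
    (hm : (true, m) ∈ l) : m.dst ∈ trailAfter t l ∨ m.dst = heroAfter h l := by
  induction l generalizing P h t with
  | nil => simp at hm
  | cons bm l ih =>
    obtain ⟨_ | _, m'⟩ := bm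
    · simpa using ih hv.2.2.2.2 (by simpa using hm)
    · rcases List.mem_cons.1 hm with hm | hm
      · cases hm
        simpa using hv.2.2.2.mem_trailAfter_or_eq_heroAfter
      · simpa using ih hv.2.2.2 hm

lemma exists_eq_append_of_badness_pos (hpos : 0 < badness t l) :
    ∃ pre m post x, l = pre ++ (true, m) :: post ∧ badness t pre = 0 ∧ x ∈ m.mid ∧
      x ∉ trailAfter t pre := by
  induction l generalizing t with
  | nil => simp at hpos
  | cons bm l ih =>
    obtain ⟨_ | _, m⟩ := bm
    · obtain ⟨pre, m', post, x, rfl, h0, hx, hxt⟩ := ih (by simpa using hpos)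
      exact ⟨(false, m) :: pre, m', post, x, rfl, by simpa using h0, hx, by simpa using hxt⟩
    · by_cases hc : m.mid.countP (· ∉ t) = 0
      · obtain ⟨pre, m', post, x, rfl, h0, hx, hxt⟩ := ih (t := insert m.src t)
          (by simpa only [badness_cons, if_true, hc, zero_add] using hpos)
        exact ⟨(true, m) :: pre, m', post, x, rfl, by simp only [badness_cons, if_true, hc, h0],
          hx, by simpa using hxt⟩
      · obtain ⟨x, hx, hxt⟩ : ∃ x ∈ m.mid, x ∉ t := by simpa [List.countP_eq_zero] using hc
        exact ⟨[], m, l, x, rfl, rfl, hx, hxt⟩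

lemma exists_eq_append_villain_src_eq (hx : x ∈ P) (hx' : x ∉ posAfter P l)
    (ht : x ∉ trailAfter t l) :
    ∃ a μ b, l = a ++ (false, μ) :: b ∧ μ.src = x ∧ x ∈ posAfter P a := by
  induction l generalizing P t with
  | nil => exact absurd hx hx'
  | cons bm l ih =>
    by_cases hsrc : bm.2.src = x
    · obtain ⟨_ | _, μ⟩ := bm
      · exact ⟨[], μ, l, rfl, hsrc, hx⟩
      · exact absurd (hsrc ▸ src_mem_trailAfter List.mem_cons_self) ht
    · obtain ⟨a, μ, b, rfl, hμ, hxa⟩ := ih (P := P \ {bm.2.src}) ⟨hx, Ne.symm hsrc⟩ hx' ht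
      exact ⟨bm :: a, μ, b, rfl, hμ, hxa⟩

lemma HVValidSeq.exists_heroPath_of_badness_eq_zero (hv : HVValidSeq S T P h l)
    (ht : ∀ y ∈ t, y ∉ P) (h0 : badness t l = 0) :
    ∃ (p : ℕ → α) (mid : ℕ → List α), p 0 = h ∧
      heroMoves l =
        (List.range (heroMoves l).length).map (fun i => ⟨p i, mid i, p (i + 1)⟩) ∧
      ∀ i < (heroMoves l).length, (⟨p i, mid i, p (i + 1)⟩ : ChessMove α) ∈ S ∧
        MoveValid {y | y ∉ t ∧ ∀ j < i, y ≠ p j} ⟨p i, mid i, p (i + 1)⟩ := by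
  induction l generalizing P h t with
  | nil => exact ⟨fun _ => h, fun _ => [], rfl, by simp [heroMoves], by simp [heroMoves]⟩
  | cons bm l ih =>
    obtain ⟨_ | _, m⟩ := bm
    · obtain ⟨-, -, -, -, hv⟩ := hv
      simpa using ih hv (fun y hy hyP => ht y hy hyP.1) (by simpa using h0)
    · obtain ⟨hmS, rfl, hval, hv⟩ := hv
      simp only [badness_cons, if_true, Nat.add_eq_zero_iff, List.countP_eq_zero,
        decide_eq_true_eq, not_not] at h0
      have ht' : ∀ y ∈ insert m.src t, y ∉ P \ {m.src} := by
        simp only [Finset.mem_insert, forall_eq_or_imp]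
        exact ⟨fun hy => hy.2 rfl, fun y hy hyP => ht y hy hyP.1⟩
      obtain ⟨p, mid, hp0, hmoves, hpath⟩ := ih hv ht' h0.2
      have hm : m = ⟨m.src, m.mid, p 0⟩ := by rw [hp0]
      refine ⟨fun | 0 => m.src | i + 1 => p i, fun | 0 => m.mid | i + 1 => mid i, rfl, ?_, ?_⟩
      · rw [heroMoves_cons_true, List.length_cons, List.range_succ_eq_map, List.map_cons,
          List.map_map]
        exact congrArg₂ _ hm hmoves
      · rintro (_ | i) hi
        · refine ⟨hm ▸ hmS, ⟨fun hy => ht _ hy hval.1, by simp⟩,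
            ⟨fun hy => ht _ hy (by simpa [hp0] using hval.2.1), by simp⟩,
            fun y hy hyQ => hyQ.1 (h0.1 y hy)⟩
        · convert hpath i (by simpa using hi) using 3
          ext y
          simp only [Nat.forall_lt_succ_left, Finset.mem_insert, not_or]
          tauto

end Badness

section Rerouting

variable {α : Type*} [DecidableEq α] {S T : Set (ChessMove α)} {P : Set α} {h x : α}
  {m μ : ChessMove α} {t : Finset α} {l b post : List (Bool × ChessMove α)}

@[simp] lemma posAfter_map_truncate :
    posAfter P (l.map (Prod.map id (ChessMove.truncate x))) = posAfter P l := by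
  induction l generalizing P with
  | nil => rfl
  | cons bm l ih => simp [ih]

@[simp] lemma trailAfter_map_truncate :
    trailAfter t (l.map (Prod.map id (ChessMove.truncate x))) = trailAfter t l := by
  induction l generalizing t with
  | nil => rfl
  | cons bm l ih => simp [ih]

lemma heroAfter_map_truncate (hl : ∀ m, (true, m) ∈ l → x ∉ m.mid) :
    heroAfter h (l.map (Prod.map id (ChessMove.truncate x))) = heroAfter h l := by
  induction l generalizing h with
  | nil => rfl
  | cons bm l ih =>
    obtain ⟨_ | _, m⟩ := bm
    · simpa using ih fun m' hm' => hl m' (List.mem_cons_of_mem _ hm')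
    · simpa [ChessMove.truncate_of_notMem (hl m List.mem_cons_self)] using
        ih fun m' hm' => hl m' (List.mem_cons_of_mem _ hm')

lemma badness_map_truncate_le :
    badness t (l.map (Prod.map id (ChessMove.truncate x))) ≤ badness t l := by
  induction l generalizing t with
  | nil => rfl
  | cons bm l ih =>
    obtain ⟨_ | _, m⟩ := bm
    · simpa using ih
    · simp only [List.map_cons, Prod.map, id, badness_cons, if_true, ChessMove.src_truncate]
      exact Nat.add_le_add ChessMove.mid_truncate_sublist.countP_le ih

lemma HVValidSeq.insert_map_truncate (hT : ClosedUnderSubmoves T) (hv : HVValidSeq S T P h l)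
    (hxP : x ∉ P) (hhx : h ≠ x) (hl : ∀ m, (true, m) ∈ l → m.dst ≠ x ∧ x ∉ m.mid) :
    HVValidSeq S T (insert x P) h (l.map (Prod.map id (ChessMove.truncate x))) := by
  induction l generalizing P h with
  | nil => trivial
  | cons bm l ih =>
    have hl' : ∀ m, (true, m) ∈ l → m.dst ≠ x ∧ x ∉ m.mid :=
      fun m hm => hl m (List.mem_cons_of_mem _ hm)
    obtain ⟨_ | _, m⟩ := bm
    · obtain ⟨hmT, hsrc, hdst, hval, hv⟩ := hv
      have hpos : insert x P \ {m.src} = insert x (P \ {m.src}) :=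
        Set.insert_sdiff_of_notMem _ fun hx => hxP (hx ▸ hval.1)
      refine ⟨hT.truncate_mem hmT x, by simpa using hsrc, ?_, hval.insert_truncate hxP, ?_⟩
      · rcases ChessMove.dst_truncate_eq_or (x := x) (m := m) with hd | hd <;> rw [hd]
        exacts [hdst, hhx.symm]
      · simpa [hpos] using ih hv (fun hx => hxP hx.1) hhx hl'
    · obtain ⟨hmS, hsrc, hval, hv⟩ := hv
      obtain ⟨hdx, hxm⟩ := hl m List.mem_cons_self
      have hpos : insert x P \ {m.src} = insert x (P \ {m.src}) :=
        Set.insert_sdiff_of_notMem _ fun hx => hxP (hx ▸ hval.1)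
      have hval' := hval.insert_truncate hxP
      rw [ChessMove.truncate_of_notMem hxm] at hval'
      simp only [List.map_cons, Prod.map_apply, id, ChessMove.truncate_of_notMem hxm,
        hvValidSeq_cons_true, hpos]
      exact ⟨hmS, hsrc, hval', ih hv (fun hx => hxP hx.1) hdx hl'⟩

lemma hvValidSeq_split_heroMove (hS : ClosedUnderSubmoves S) (hmS : m ∈ S)
    (hval : MoveValid P m) (hx : x ∈ m.mid) (hdeg : m.src ≠ m.dst) :
    HVValidSeq S T (insert x P) m.src
      [(true, m.truncate x), (true, (m.reverse.truncate x).reverse)] := by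
  have hxP : x ∉ P := hval.2.2 x hx
  have hxr : x ∈ m.reverse.mid := by simpa using hx
  simp only [hvValidSeq_cons_true, hvValidSeq_nil, and_true, true_and, ChessMove.src_truncate,
    ChessMove.src_reverse, ChessMove.dst_truncate_of_mem hx, ChessMove.dst_truncate_of_mem hxr]
  refine ⟨hS.truncate_mem hmS x, hval.insert_truncate hxP,
    hS.reverse_truncate_reverse_mem hmS x, ?_⟩
  refine (hval.reverse.insert_truncate hxP).reverse.diff_singleton ?_ (by simpa using hdeg.symm)
  rw [ChessMove.src_reverse, ChessMove.dst_truncate_of_mem hxr]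
  exact fun h => hxP (h ▸ hval.1)

/-- Replaces a segment `(false, μ) :: b ++ [(true, m)]` in which `μ` vacates `x`: the villain
stays on `x`, moves of `b` passing over `x` capture there instead, and the hero move `m` is split
into its part up to its first visit to `x` and its part after its last visit to `x`. -/
def rerouted (x : α) (b : List (Bool × ChessMove α)) (m : ChessMove α) :
    List (Bool × ChessMove α) :=
  b.map (Prod.map id (ChessMove.truncate x)) ++
    [(true, m.truncate x), (true, (m.reverse.truncate x).reverse)]

lemma HVValidSeq.rerouted (hS : ClosedUnderSubmoves S) (hT : ClosedUnderSubmoves T)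
    (hv : HVValidSeq S T P h ((false, μ) :: b ++ [(true, m)])) (hμ : μ.src = x)
    (hx : x ∈ m.mid) (hdeg : m.src ≠ m.dst)
    (hb : ∀ m', (true, m') ∈ b → m'.dst ≠ x ∧ x ∉ m'.mid) :
    HVValidSeq S T P h (rerouted x b m) ∧
      posAfter P (rerouted x b m) = posAfter P ((false, μ) :: b ++ [(true, m)]) ∧
      heroAfter h (rerouted x b m) = heroAfter h ((false, μ) :: b ++ [(true, m)]) := by
  obtain ⟨⟨-, hμh, -, hμval, hvb⟩, hvm⟩ := hvValidSeq_append.1 hv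
  obtain ⟨hmS, hsrc, hmval, -⟩ := hvm
  subst hμ
  have hxP₁ : μ.src ∉ posAfter (P \ {μ.src}) b := hmval.2.2 _ hx
  have hP : insert μ.src (P \ {μ.src}) = P := by simpa using hμval.1
  have hvb' := hvb.insert_map_truncate hT (by simp) (Ne.symm hμh) hb
  rw [hP] at hvb'
  have hpos : posAfter P (b.map (Prod.map id (ChessMove.truncate μ.src))) =
      insert μ.src (posAfter (P \ {μ.src}) b) := by
    rw [posAfter_map_truncate]
    conv_lhs => rw [← hP]
    exact posAfter_insert fun bm hbm => (hvb.src_mem hbm).2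
  have hhero := heroAfter_map_truncate (h := h) fun m' hm' => (hb m' hm').2
  refine ⟨hvValidSeq_append.2 ⟨hvb', ?_⟩, ?_, ?_⟩
  · rw [hpos, hhero]
    exact hsrc ▸ hvValidSeq_split_heroMove hS hmS hmval hx hdeg
  · have hxr : μ.src ∈ m.reverse.mid := by simpa using hx
    rw [rerouted, posAfter_append, hpos, posAfter_append]
    simp only [posAfter_cons, posAfter_nil, ChessMove.src_truncate, ChessMove.src_reverse,
      ChessMove.dst_truncate_of_mem hxr]
    rw [Set.sdiff_sdiff_comm, Set.insert_sdiff_self_of_notMem hxP₁]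
  · simp [rerouted, heroAfter_append, hhero]

lemma badness_rerouted_append_lt (hx : x ∈ m.mid) (hxt : x ∉ trailAfter t b) :
    badness t (rerouted x b m ++ post) < badness t ((false, μ) :: b ++ (true, m) :: post) := by
  have hsplit := ChessMove.mid_truncate_countP_add_lt (p := (· ∉ trailAfter t b)) hx
    (by simpa using hxt)
  have hmb := countP_notMem_anti (Finset.subset_insert m.src (trailAfter t b))
    (m.reverse.truncate x).reverse.mid
  have hpost := badness_anti (l := post) (Finset.subset_insert x (insert m.src (trailAfter t b)))
  have hmap := badness_map_truncate_le (t := t) (l := b) (x := x)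
  simp only [rerouted, List.append_assoc, badness_append, trailAfter_map_truncate,
    List.cons_append, List.nil_append, badness_cons, if_true,
    Bool.false_eq_true, if_false, ChessMove.src_truncate, ChessMove.src_reverse,
    ChessMove.dst_truncate_of_mem (by simpa using hx : x ∈ m.reverse.mid)]
  omega

end Rerouting

section Surgery

variable {α : Type*} [DecidableEq α] {S T : Set (ChessMove α)} {p0 : α}
  {ms : List (Bool × ChessMove α)}

lemma HVSolution.exists_badness_lt (hS : ClosedUnderSubmoves S) (hT : ClosedUnderSubmoves T)
    (hsol : HVSolution S T p0 ms) (hpos : 0 < badness ∅ ms) :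
    ∃ ms', HVSolution S T p0 ms' ∧ badness ∅ ms' < badness ∅ ms := by
  obtain ⟨pre, m, post, x, rfl, hpre, hx, hxt⟩ := exists_eq_append_of_badness_pos hpos
  obtain ⟨hvpre, -, hsrc, hmval, -⟩ := hvValidSeq_append.1 hsol.1
  have hxP : x ∉ posAfter Set.univ pre := hmval.2.2 x hx
  obtain ⟨a, μ, b, rfl, hμ, -⟩ := exists_eq_append_villain_src_eq (Set.mem_univ x) hxP hxt
  have hb : ∀ m', (true, m') ∈ b → m'.dst ≠ x ∧ x ∉ m'.mid := by
    intro m' hm'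
    have hm'' : (true, m') ∈ a ++ (false, μ) :: b := by simp [hm']
    refine ⟨fun hd => ?_, fun hxm => hxt (mem_trailAfter_of_badness_eq_zero hpre hm'' hxm)⟩
    rcases hvpre.dst_mem_trailAfter_or_eq_heroAfter (t := ∅) hm'' with h | h
    · exact hxt (hd ▸ h)
    · exact hxP (hd ▸ h ▸ hsrc ▸ hmval.1)
  have hdeg := hsol.src_ne_dst (m := m) (by simp)
  have hxt' : x ∉ trailAfter (trailAfter ∅ a) b := by simpa [trailAfter_append] using hxt
  have hms : a ++ (false, μ) :: b ++ (true, m) :: post =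
      a ++ ((false, μ) :: b ++ [(true, m)]) ++ post := by simp
  rw [hms] at hsol ⊢
  obtain ⟨hv, hpos, hhero⟩ := (hvValidSeq_append.1 (hvValidSeq_append.1 hsol.1).1).2.rerouted
    hS hT hμ hx hdeg hb
  refine ⟨a ++ rerouted x b m ++ post, hsol.replace hv hpos hhero, ?_⟩
  simpa [badness_append] using badness_rerouted_append_lt (μ := μ) (post := post) hx hxt'

end Surgery

theorem solution_hero_path_general {α : Type*} [DecidableEq α]
    (S T : Set (ChessMove α))
    (hS : ClosedUnderSubmoves S) (hT : ClosedUnderSubmoves T)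
    (p0 : α) (ms : List (Bool × ChessMove α)) (hsol : HVSolution S T p0 ms) :
    ∃ (ms' : List (Bool × ChessMove α)) (p : ℕ → α) (k : ℕ),
      p 0 = p0 ∧ HVSolution S T p0 ms' ∧ HeroFollows p k ms' ∧ HeroPath S p k := by
  induction hb : badness ∅ ms using Nat.strong_induction_on generalizing ms with
  | _ n ih =>
  rcases Nat.eq_zero_or_pos n with rfl | hpos
  · obtain ⟨p, mid, hp0, hmoves, hpath⟩ :=
      hsol.1.exists_heroPath_of_badness_eq_zero (by simp) hb
    exact ⟨ms, p, _, hp0, hsol, ⟨mid, hmoves⟩, fun i hi => ⟨mid i, by simpa using hpath i hi⟩⟩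
  · obtain ⟨ms', hsol', hlt⟩ := hsol.exists_badness_lt hS hT (hb ▸ hpos)
    exact ih _ (hb ▸ hlt) ms' hsol' rfl

/-- (Hero–villain setting.) If the puzzle has a solution, then it has a
solution in which the sequence of locations visited by the hero forms a hero path. -/
theorem solution_hero_path {α : Type*} [Fintype α] [DecidableEq α]
    (S T : Set (ChessMove α))
    (hS : ClosedUnderSubmoves S) (hT : ClosedUnderSubmoves T) (hST : S ⊆ T)
    (p0 : α) (ms : List (Bool × ChessMove α)) (hsol : HVSolution S T p0 ms) :
    ∃ (ms' : List (Bool × ChessMove α)) (p : ℕ → α) (k : ℕ),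
      p 0 = p0 ∧ HVSolution S T p0 ms' ∧ HeroFollows p k ms' ∧ HeroPath S p k :=
  solution_hero_path_general S T hS hT p0 ms hsol
end

section
/- In the hero–villain setting, suppose p₀, p₁, …, p_k with k > 0 is a minimal solution hero path; that is, every villain location is strongly capturable by p₀, …, p_k, but for no j < k is every villain location strongly capturable by p₀, …, p_j. Then there is a villain location v such that p₀, p₁, …, p_j is v-interesting for all j < k. -/
/-- Splitting a move of a submove-closed type at its intermediate locations lying in `V`
yields a walk in `ICG(V, ∅)` between its endpoints. -/
lemma split_walk {α : Type*} {T : Set (ChessMove α)} (hT : ClosedUnderSubmoves T)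
    (V : Set α) (b : α) (hb : b ∈ V) :
    ∀ (l pre : List α) (a : α), a ∈ V → (∀ x ∈ pre, x ∉ V) →
      (⟨a, pre ++ l, b⟩ : ChessMove α) ∈ T →
      Relation.ReflTransGen (ICGEdge T V ∅) a b := by
  intro l
  induction l with
  | nil =>
    intro pre a ha hpre hm
    refine Relation.ReflTransGen.single ⟨ha, hb, ⟨a, pre ++ [], b⟩, hm, rfl, rfl, ?_⟩
    simpa using hpre
  | cons c l ih =>
    intro pre a ha hpre hm
    by_cases hc : c ∈ V
    · have hedge : ICGEdge T V ∅ a c := by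
        refine ⟨ha, hc, ⟨a, pre, c⟩, hT _ hm _ ?_, rfl, rfl, ?_⟩
        · refine List.IsPrefix.isInfix ⟨l ++ [b], ?_⟩
          simp [ChessMove.toList]
        · simpa using hpre
      have htail : (⟨c, l, b⟩ : ChessMove α) ∈ T := by
        apply hT _ hm
        refine List.IsSuffix.isInfix ⟨a :: pre, ?_⟩
        simp [ChessMove.toList]
      exact Relation.ReflTransGen.head hedge (ih [] c hc (by simp) htail)
    · refine ih (pre ++ [c]) a ha ?_ (by simpa using hm)
      intro x hx
      rcases List.mem_append.1 hx with h | h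
      · exact hpre x h
      · simp at h; subst h; exact hc

/-- (Hero–villain setting.) Suppose `p₀, p₁, …, p_k` (with `k > 0`) is a
minimal solution hero path: every villain location is strongly capturable by it, but no
proper prefix has this property. Then there is a villain location `v` such that
`p₀, p₁, …, p_j` is `v`-interesting for all `j < k`. -/
theorem minimal_interesting {α : Type*} [Fintype α] [DecidableEq α]
    (S T : Set (ChessMove α))
    (hS : ClosedUnderSubmoves S) (hT : ClosedUnderSubmoves T) (hST : S ⊆ T)
    (p : ℕ → α) (k : ℕ) (hk : 0 < k) (hpath : HeroPath S p k)
    (hall : ∀ v : α, v ≠ p 0 → StronglyCapturable T p k v)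
    (hmin : ∀ j < k, ¬ ∀ v : α, v ≠ p 0 → StronglyCapturable T p j v) :
    ∃ v : α, v ≠ p 0 ∧ ∀ j < k, Interesting S T p j v := by
  -- get a villain not strongly capturable by the prefix of length k-1
  obtain ⟨v, hv⟩ := not_forall.1 (hmin (k - 1) (by omega))
  rw [Classical.not_imp] at hv
  obtain ⟨hv0, hvnot⟩ := hv
  -- its strong-capture witness for the full path must be i = k-1
  obtain ⟨i, hik, hwalk⟩ := hall v hv0
  have hieq : i = k - 1 := by
    by_contra h
    exact hvnot ⟨i, by omega, hwalk⟩
  subst hieq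
  have hk1 : k - 1 + 1 = k := by omega
  rw [hk1] at hwalk
  -- hwalk : walk from v to p k in H_{k-1}
  refine ⟨v, hv0, fun j hj => ?_⟩
  constructor
  · -- not strongly capturable by prefix j
    rintro ⟨i, hij, hw⟩
    exact hvnot ⟨i, by omega, hw⟩
  · -- weakly capturable after prefix j
    refine ⟨k, p, le_of_lt hj, fun _ _ => rfl, hpath, ?_⟩
    -- lift the H_{k-1} walk to a G_j walk
    have hedge : ∀ a b, Hgraph T p (k - 1) a b →
        Relation.ReflTransGen (Ggraph T p j) a b := by
      intro a b hab
      obtain ⟨ha, hb, m, hmT, hsrc, hdst, -⟩ := hab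
      subst hsrc; subst hdst
      have ha' : m.src ∈ {x | ∀ i ≤ j, x ≠ p i} := fun i hi => ha i (by omega)
      have hb' : m.dst ∈ {x | ∀ i ≤ j, x ≠ p i} := fun i hi => hb i (by omega)
      exact split_walk hT _ _ hb' m.mid [] m.src ha' (by simp)
        (by simpa using hmT)
    generalize hpk : p k = w at hwalk ⊢
    clear hpk
    induction hwalk with
    | refl => exact Relation.ReflTransGen.refl
    | tail _ hbc ih => exact ih.trans (hedge _ _ hbc)
end

section
/- In the hero–villain setting with T symmetric, if a villain location v is weakly capturable after a hero path p₀, p₁, …, p_k with k ≥ 1, then there is a directed walk from v to p_k in G_{k−1}(p). -/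
/-- Auxiliary: decomposition of a move into ICG edges, strengthened for induction. -/
lemma decompose_aux {α : Type*} (T : Set (ChessMove α)) (hT : ClosedUnderSubmoves T)
    (W : Set α) :
    ∀ (mid pre : List α) (a b : α),
      (⟨a, pre ++ mid, b⟩ : ChessMove α) ∈ T → a ∈ W → b ∈ W →
      (∀ x ∈ pre, x ∉ W) →
      Relation.ReflTransGen (ICGEdge T W ∅) a b := by
  intro mid
  induction mid with
  | nil =>
    intro pre a b hm ha hb hpre
    apply Relation.ReflTransGen.single
    refine ⟨ha, hb, ⟨a, pre ++ [], b⟩, hm, rfl, rfl, ?_⟩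
    intro x hx hxW
    rcases hxW with hxW | hxW
    · exact hpre x (by simpa using hx) hxW
    · exact hxW
  | cons y rest ih =>
    intro pre a b hm ha hb hpre
    by_cases hyW : y ∈ W
    · have h1 : (⟨a, pre, y⟩ : ChessMove α) ∈ T := by
        apply hT _ hm
        have hpref : (ChessMove.toList ⟨a, pre, y⟩) <+:
            (ChessMove.toList ⟨a, pre ++ y :: rest, b⟩) :=
          ⟨rest ++ [b], by simp [ChessMove.toList]⟩
        exact hpref.isInfix
      have h2 : (⟨y, rest, b⟩ : ChessMove α) ∈ T := by
        apply hT _ hm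
        have hsuf : (ChessMove.toList ⟨y, rest, b⟩) <:+
            (ChessMove.toList ⟨a, pre ++ y :: rest, b⟩) :=
          ⟨a :: pre, by simp [ChessMove.toList]⟩
        exact hsuf.isInfix
      have hedge : ICGEdge T W ∅ a y := by
        refine ⟨ha, hyW, ⟨a, pre, y⟩, h1, rfl, rfl, ?_⟩
        intro x hx hxW
        rcases hxW with hxW | hxW
        · exact hpre x hx hxW
        · exact hxW
      exact Relation.ReflTransGen.head hedge
        (ih [] y b (by simpa using h2) hyW hb (by simp))
    · refine ih (pre ++ [y]) a b (by simpa using hm) ha hb ?_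
      intro x hx
      rcases List.mem_append.1 hx with hx | hx
      · exact hpre x hx
      · simpa using (List.mem_singleton.1 hx ▸ hyW)

/-- Auxiliary: a move of `T` with both endpoints in `W` yields a walk in `ICG(W, ∅)`. -/
lemma decompose {α : Type*} (T : Set (ChessMove α)) (hT : ClosedUnderSubmoves T)
    (W : Set α) (m : ChessMove α) (hm : m ∈ T) (ha : m.src ∈ W) (hb : m.dst ∈ W) :
    Relation.ReflTransGen (ICGEdge T W ∅) m.src m.dst :=
  decompose_aux T hT W m.mid [] m.src m.dst (by simpa using hm) ha hb (by simp)

/-- (Hero–villain setting, `T` symmetric.) If a villain location `v` is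
weakly capturable after a hero path `p₀, p₁, …, p_k` with `k ≥ 1`, then there is a
directed walk from `v` to `p_k` in `G_{k-1}(p)`. -/
theorem weak_connected {α : Type*} [Fintype α] [DecidableEq α]
    (S T : Set (ChessMove α))
    (hS : ClosedUnderSubmoves S) (hT : ClosedUnderSubmoves T) (hST : S ⊆ T)
    (hsym : SymmetricType T)
    (p : ℕ → α) (k : ℕ) (hk : 1 ≤ k) (hpath : HeroPath S p k)
    (v : α) (hv : v ≠ p 0)
    (hweak : WeaklyCapturable S T p k v) :
    Relation.ReflTransGen (Ggraph T p (k - 1)) v (p k) := by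
  obtain ⟨k', q, hkk', hq, hqpath, hwalk⟩ := hweak
  have hpk' : ∀ j < k - 1, p k ≠ p j := by
    intro j hj
    obtain ⟨mid, _, hval⟩ := hpath (k - 1) (by omega)
    have := hval.2.1 j hj
    rwa [show k - 1 + 1 = k from by omega] at this
  by_cases hdeg : p k = p (k - 1)
  · -- degenerate case: p k = p (k-1); then k' = k and the walk must be trivial
    have hk'eq : k' = k := by
      by_contra h
      have hkk : k < k' := lt_of_le_of_ne hkk' (Ne.symm h)
      obtain ⟨mid, _, hval⟩ := hqpath k hkk
      have h1 := hval.1 (k - 1) (by omega)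
      exact h1 (by rw [hq k le_rfl, hq (k - 1) (by omega)]; exact hdeg)
    rw [hk'eq, hq k le_rfl] at hwalk
    have hw2 := hwalk
    rcases Relation.ReflTransGen.cases_tail hw2 with h | ⟨c, _, hedge⟩
    · rw [← h]
    · exact absurd rfl (hedge.2.1 k le_rfl)
  · -- main case
    set W : Set α := {x | ∀ j ≤ k - 1, x ≠ p j} with hW
    have hpkW : p k ∈ W := by
      intro j hj
      rcases lt_or_eq_of_le hj with h | h
      · exact hpk' j h
      · rw [h]; exact hdeg
    have hqW : ∀ i, k ≤ i → i ≤ k' → q i ∈ W := by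
      intro i hki hik' j hj
      rcases lt_or_eq_of_le hik' with hlt | heq
      · obtain ⟨mid, _, hval⟩ := hqpath i hlt
        have := hval.1 j (by omega)
        rwa [hq j (by omega)] at this
      · rcases lt_or_eq_of_le hki with hlt2 | heq2
        · obtain ⟨mid, _, hval⟩ := hqpath (i - 1) (by omega)
          have := hval.2.1 j (by omega)
          rwa [show i - 1 + 1 = i from by omega, hq j (by omega)] at this
        · rw [← heq2, hq k le_rfl]
          exact hpkW j hj
    have hlift : ∀ a b : α, Relation.ReflTransGen (Ggraph T p k) a b →
        Relation.ReflTransGen (Ggraph T p (k - 1)) a b := by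
      intro a b hab
      induction hab with
      | refl => exact Relation.ReflTransGen.refl
      | tail hbc hedge ih =>
        obtain ⟨haV, hbV, m, hm, hsrc, hdst, _⟩ := hedge
        have h1 : m.src ∈ W := by rw [hsrc]; intro j hj; exact haV j (by omega)
        have h2 : m.dst ∈ W := by rw [hdst]; intro j hj; exact hbV j (by omega)
        have hdc := decompose T hT W m hm h1 h2
        rw [hsrc, hdst] at hdc
        exact ih.trans hdc
    have hdown : ∀ d, k + d ≤ k' →
        Relation.ReflTransGen (Ggraph T p (k - 1)) (q (k + d)) (q k) := by
      intro d
      induction d with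
      | zero => intro _; exact Relation.ReflTransGen.refl
      | succ n ih =>
        intro h
        obtain ⟨mid, hmS, hval⟩ := hqpath (k + n) (by omega)
        have hrev := hsym _ (hST hmS)
        have hstep := decompose T hT W _ hrev
          (hqW (k + n + 1) (by omega) (by omega)) (hqW (k + n) (by omega) (by omega))
        exact hstep.trans (ih (by omega))
    have hfin := hdown (k' - k) (by omega)
    rw [show k + (k' - k) = k' from by omega] at hfin
    exact (hlift v (q k') hwalk).trans (hq k le_rfl ▸ hfin)
end
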